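/- Let 0 < ε < 1/3, δ ∈ (0,1/7], n = O(d log d), and ŵ ∈ Δ_{n,ε} satisfying ‖μ_ŵ − μ‖₂ ≤ C_{CDG1}(r_o + r_d′). Then, on the high-probability event of the sparse-inner-product bound (probability at least 1 − δ), for every β_η with δ_{β_η} = β_η − β*: |Σ_{i∈I_o} ŵ_i h(r_i(β_η)) (x_i − μ_ŵ)^⊤ δ_{β_η}| ≤ C_{2δ} (r_o + r_d) ‖δ_{β_η}‖₂, where C_{2δ} = 2C_{CDG1} + 2C_τ(2 + √(log(1/δ))). -/

import Mathlib

open MeasureTheory ProbabilityTheory Finset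
open scoped RealInnerProductSpace BigOperators ENNReal

noncomputable section

/-- The Huber loss function `H`. -/
def huberLoss (t : ℝ) : ℝ := if |t| ≤ 1 then t ^ 2 / 2 else |t| - 1 / 2

/-- The derivative `h` of the Huber loss. -/
def hub (t : ℝ) : ℝ := if |t| ≤ 1 then t else Real.sign t

/-- The weight simplex `Δ_{n,ε}`. -/
def weightSet (n : ℕ) (ε : ℝ) : Set (Fin n → ℝ) :=
  {w | ∑ i, w i = 1 ∧ ∀ i, 0 ≤ w i ∧ w i ≤ 1 / ((1 - ε) * n)}

/-- The rank-one operator `u u^⊤`. -/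
def outerProd {d : ℕ} (u : EuclideanSpace ℝ (Fin d)) :
    EuclideanSpace ℝ (Fin d) →L[ℝ] EuclideanSpace ℝ (Fin d) :=
  ((innerSL ℝ) u).smulRight u

/-! Since `|h| ≤ 1`, the coefficients `u_i = ŵ_i h(r_i)` satisfy `|u_i| ≤ 1 / ((1 - ε) n)`,
hence `∑_{I_o} |u_i| ≤ 1/2` and `∑_{I_o} u_i² ≤ 9ε / (4n)`. Writing
`x_i - μ_ŵ = (x_i - μ) - (μ_ŵ - μ)`, the mean shift costs at most
`½ C_{CDG1} (r_o + r_d') ‖β_η - β*‖` with `r_d' ≤ 2 r_d`. The centred sum is handled by the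
sparse-inner-product bound: as `∑ u_i² ≤ 1 / n`, its first two terms contribute
`(2 + √(log (1/δ))) r_d`, and in the third `m log (n / m) ≤ ε n log (1 / ε)` because
`t ↦ t log (n / t)` increases on `(0, n / e]`, which gives `3/2 r_o`. -/

open Real

lemma abs_hub_le_one (t : ℝ) : |hub t| ≤ 1 := by
  unfold hub
  split_ifs with h
  · exact h
  · rcases lt_trichotomy t 0 with ht | rfl | ht
    · simp [Real.sign_of_neg ht]
    · simp
    · simp [Real.sign_of_pos ht]

lemma abs_mul_hub_le_of_mem_weightSet {n : ℕ} {ε : ℝ} {w : Fin n → ℝ} (hw : w ∈ weightSet n ε)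
    (i : Fin n) (t : ℝ) : |w i * hub t| ≤ 1 / ((1 - ε) * n) := by
  obtain ⟨hw0, hw1⟩ := hw.2 i
  rw [abs_mul, abs_of_nonneg hw0]
  calc w i * |hub t| ≤ w i * 1 := by gcongr; exact abs_hub_le_one t
    _ ≤ 1 / ((1 - ε) * n) := by rwa [mul_one]

lemma mul_log_div_le_mul_log_div {s t N : ℝ} (hs : 0 < s) (hst : s ≤ t)
    (htN : exp 1 * t ≤ N) : s * log (N / s) ≤ t * log (N / t) := by
  have ht : 0 < t := hs.trans_le hst
  have hN : 0 < N := lt_of_lt_of_le (by positivity) htN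
  have hlog : 1 ≤ log (N / t) := by
    rwa [Real.le_log_iff_exp_le (by positivity), le_div_iff₀ ht]
  have hsplit : log (N / s) = log (N / t) + log (t / s) := by
    rw [← Real.log_mul (by positivity) (by positivity)]
    congr 1
    field_simp
  have hts : s * log (t / s) ≤ t - s :=
    calc s * log (t / s) ≤ s * (t / s - 1) := by
          gcongr; exact Real.log_le_sub_one_of_pos (by positivity)
      _ = t - s := by field_simp
  rw [hsplit, mul_add]
  nlinarith [mul_le_mul_of_nonneg_left hlog (sub_nonneg.2 hst)]

lemma sqrt_div_le_two_mul_sqrt_mul_log_div {d : ℕ} (n : ℕ) (hd : 1 ≤ (d : ℝ) * log d) :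
    √((d : ℝ) / n) ≤ 2 * √((d : ℝ) * log d / n) := by
  have hd2 : (2 : ℝ) ≤ d := by
    rcases Nat.lt_or_ge d 2 with h | h
    · interval_cases d <;> norm_num at hd
    · exact_mod_cast h
  have hlog : 1 / 4 ≤ log d :=
    (by linarith [Real.log_two_gt_d9] : (1 / 4 : ℝ) ≤ log 2).trans
      (Real.log_le_log (by norm_num) hd2)
  rw [show (2 : ℝ) = √(2 ^ 2) by simp, ← Real.sqrt_mul (by positivity)]
  gcongr
  rw [← mul_div_assoc]
  gcongr
  nlinarith

section Weights

variable {ι : Type*} {I : Finset ι} {u : ι → ℝ} {n : ℕ} {ε : ℝ}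

lemma sum_abs_le_half_of_abs_le (hε : ε ≤ 1 / 3) (hI : (#I : ℝ) ≤ ε * n)
    (hu : ∀ i, |u i| ≤ 1 / ((1 - ε) * n)) : ∑ i ∈ I, |u i| ≤ 1 / 2 := by
  have hε1 : 0 < 1 - ε := by linarith
  calc ∑ i ∈ I, |u i| ≤ #I * (1 / ((1 - ε) * n)) := by
        simpa using Finset.sum_le_card_nsmul I _ _ fun i _ => hu i
    _ ≤ ε * n * (1 / ((1 - ε) * n)) := by gcongr
    _ ≤ 1 / 2 := by
        rcases (Nat.cast_nonneg (α := ℝ) n).eq_or_lt with hn | hn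
        · simp [← hn]
        · rw [mul_one_div, mul_div_mul_right _ _ hn.ne', div_le_iff₀ hε1]
          linarith

lemma sum_sq_le_of_abs_le (hε0 : 0 ≤ ε) (hε : ε ≤ 1 / 3) (hI : (#I : ℝ) ≤ ε * n)
    (hu : ∀ i, |u i| ≤ 1 / ((1 - ε) * n)) : ∑ i ∈ I, u i ^ 2 ≤ 9 / 4 * ε / n := by
  have hε1 : 0 < 1 - ε := by linarith
  calc ∑ i ∈ I, u i ^ 2 ≤ #I * (1 / ((1 - ε) * n)) ^ 2 := by
        simpa using Finset.sum_le_card_nsmul I _ _ fun i _ =>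
          (sq_abs (u i)).symm.trans_le (pow_le_pow_left₀ (abs_nonneg _) (hu i) 2)
    _ ≤ ε * n * (1 / ((1 - ε) * n)) ^ 2 := by gcongr
    _ ≤ 9 / 4 * ε / n := by
        rcases (Nat.cast_nonneg (α := ℝ) n).eq_or_lt with hn | hn
        · simp [← hn]
        · have h49 : 4 / 9 ≤ (1 - ε) ^ 2 := by nlinarith
          rw [div_pow, one_pow, mul_pow, mul_one_div, le_div_iff₀ hn,
            div_mul_eq_mul_div, div_le_iff₀ (by positivity)]
          nlinarith [mul_le_mul_of_nonneg_left h49 (by positivity : 0 ≤ ε * n ^ 3)]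

end Weights

lemma sqrt_mul_sparse_factor_le {ε n m s D L : ℝ} (hε0 : 0 < ε) (hε : ε < 1 / 3)
    (hm1 : 1 ≤ m) (hm : m ≤ ε * n) (hs : s ≤ 9 / 4 * ε / n) (hD : 1 ≤ D) (hL : 0 ≤ L) :
    √s * ((1 + L) + √D + √(m * log (n / m))) ≤
      (2 + L) * √(D / n) + 3 / 2 * (ε * √(log (1 / ε))) := by
  have hn : 0 < n := by nlinarith
  have hmn : m ≤ n := by nlinarith
  have hs1 : s ≤ 1 / n := hs.trans (by gcongr; linarith)
  have hsD : s * D ≤ D / n := by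
    rw [div_eq_mul_one_div, mul_comm s]; gcongr
  have hlog_nm : 0 ≤ m * log (n / m) :=
    mul_nonneg (by linarith) (Real.log_nonneg (by rw [le_div_iff₀ (by linarith)]; linarith))
  have hlog_ε : 0 ≤ log (1 / ε) := Real.log_nonneg (by rw [le_div_iff₀ hε0]; linarith)
  have hmlog : m * log (n / m) ≤ ε * n * log (1 / ε) := by
    have := mul_log_div_le_mul_log_div (N := n) (by linarith) hm
      (by nlinarith [Real.exp_one_lt_d9])
    rwa [div_mul_cancel_right₀ hn.ne', ← one_div] at this
  have h1 : √s ≤ √(D / n) := Real.sqrt_le_sqrt (hs1.trans (by gcongr))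
  have h2 : √s * √D ≤ √(D / n) := by
    rw [← Real.sqrt_mul' _ (by linarith)]; exact Real.sqrt_le_sqrt hsD
  have h3 : √s * √(m * log (n / m)) ≤ 3 / 2 * (ε * √(log (1 / ε))) := by
    rw [← Real.sqrt_mul' _ hlog_nm]
    calc √(s * (m * log (n / m))) ≤ √((3 / 2 * ε) ^ 2 * log (1 / ε)) := by
          apply Real.sqrt_le_sqrt
          calc s * (m * log (n / m)) ≤ 9 / 4 * ε / n * (ε * n * log (1 / ε)) := by
                gcongr
            _ = (3 / 2 * ε) ^ 2 * log (1 / ε) := by field_simp; ring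
      _ = 3 / 2 * (ε * √(log (1 / ε))) := by
          rw [Real.sqrt_mul (by positivity), Real.sqrt_sq (by positivity)]; ring
  nlinarith [mul_le_mul_of_nonneg_right h1 (by linarith : 0 ≤ 1 + L)]

def SparseInnerProductBound {n d : ℕ} (x : Fin n → EuclideanSpace ℝ (Fin d))
    (μ : EuclideanSpace ℝ (Fin d)) (ε δ Cτ : ℝ) : Prop :=
  ∀ m : ℕ, 1 ≤ m → (m : ℝ) ≤ 3 * (ε * n) →
    ∀ I : Finset (Fin n), I.card = m →
    ∀ (u : Fin n → ℝ) (v : EuclideanSpace ℝ (Fin d)),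
      |∑ i ∈ I, u i * ⟪x i - μ, v⟫| ≤
        Cτ * Real.sqrt (∑ i ∈ I, u i ^ 2) * ‖v‖ *
          ((1 + Real.sqrt (Real.log (1 / δ))) + Real.sqrt ((d : ℝ) * Real.log d) +
            Real.sqrt (m * Real.log ((n : ℝ) / m)))

lemma SparseInnerProductBound.abs_sum_le {n d : ℕ} {x : Fin n → EuclideanSpace ℝ (Fin d)}
    {μ : EuclideanSpace ℝ (Fin d)} {ε δ Cτ : ℝ} (hsparse : SparseInnerProductBound x μ ε δ Cτ)
    (hCτ : 0 ≤ Cτ) (hε0 : 0 < ε) (hε : ε < 1 / 3) (hd : 1 ≤ (d : ℝ) * log d)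
    {I : Finset (Fin n)} (hI : (#I : ℝ) ≤ ε * n) {u : Fin n → ℝ}
    (hu : ∑ i ∈ I, u i ^ 2 ≤ 9 / 4 * ε / n) (v : EuclideanSpace ℝ (Fin d)) :
    |∑ i ∈ I, u i * ⟪x i - μ, v⟫| ≤
      Cτ * ((2 + √(log (1 / δ))) * √((d : ℝ) * log d / n) + 3 / 2 * (ε * √(log (1 / ε)))) *
        ‖v‖ := by
  rcases I.eq_empty_or_nonempty with rfl | hne
  · simp only [Finset.sum_empty, abs_zero]; positivity
  have hm1 : (1 : ℝ) ≤ #I := by exact_mod_cast hne.card_pos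
  calc |∑ i ∈ I, u i * ⟪x i - μ, v⟫|
      ≤ Cτ * √(∑ i ∈ I, u i ^ 2) * ‖v‖ * ((1 + √(log (1 / δ))) + √((d : ℝ) * log d) +
          √(#I * log (n / #I))) :=
        hsparse #I hne.card_pos (by nlinarith) I rfl u v
    _ = Cτ * (√(∑ i ∈ I, u i ^ 2) * ((1 + √(log (1 / δ))) + √((d : ℝ) * log d) +
          √(#I * log (n / #I)))) * ‖v‖ := by ring
    _ ≤ _ := by
        gcongr
        exact sqrt_mul_sparse_factor_le hε0 hε hm1 hI hu hd (Real.sqrt_nonneg _)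

lemma abs_sum_mul_inner_sub_le {ι E : Type*} [NormedAddCommGroup E] [InnerProductSpace ℝ E]
    (I : Finset ι) (u : ι → ℝ) (x : ι → E) (μ ν v : E) :
    |∑ i ∈ I, u i * ⟪x i - ν, v⟫| ≤
      |∑ i ∈ I, u i * ⟪x i - μ, v⟫| + (∑ i ∈ I, |u i|) * (‖ν - μ‖ * ‖v‖) := by
  have hsplit : ∑ i ∈ I, u i * ⟪x i - ν, v⟫ =
      ∑ i ∈ I, u i * ⟪x i - μ, v⟫ - (∑ i ∈ I, u i) * ⟪ν - μ, v⟫ := by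
    rw [Finset.sum_mul, ← Finset.sum_sub_distrib]
    refine Finset.sum_congr rfl fun i _ => ?_
    rw [show x i - ν = (x i - μ) - (ν - μ) by abel, inner_sub_left]
    ring
  rw [hsplit]
  refine (abs_sub _ _).trans ?_
  rw [abs_mul]
  gcongr
  · exact Finset.abs_sum_le_sum_abs _ _
  · exact abs_real_inner_le_norm _ _

theorem conf_cond2_subGaussian_general
    {n d : ℕ} {ε lamo δ Cτ C1 : ℝ}
    (hε0 : 0 < ε) (hε : ε < 1 / 3)
    (hCτ : 0 < Cτ) (hC1 : 0 < C1)
    (ro rd rd' : ℝ)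
    (hro : ro = ε * Real.sqrt (Real.log (1 / ε)))
    (hrd : rd = Real.sqrt ((d : ℝ) * Real.log d / n))
    (hrd' : rd' = Real.sqrt ((d : ℝ) / n))
    -- `n` is large, of order `d log d`
    (hd : 1 ≤ (d : ℝ) * Real.log d)
    (w y : Fin n → ℝ) (hw : w ∈ weightSet n ε)
    (x : Fin n → EuclideanSpace ℝ (Fin d))
    (Io : Finset (Fin n)) (hIo : (Io.card : ℝ) ≤ ε * n)
    (μ μw : EuclideanSpace ℝ (Fin d))
    (hμw : ‖μw - μ‖ ≤ C1 * (ro + rd'))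
    -- the sparse-inner-product bound
    (hsparse : ∀ m : ℕ, 1 ≤ m → (m : ℝ) ≤ 3 * (ε * n) →
      ∀ I : Finset (Fin n), I.card = m →
      ∀ (u : Fin n → ℝ) (v : EuclideanSpace ℝ (Fin d)),
        |∑ i ∈ I, u i * ⟪x i - μ, v⟫| ≤
          Cτ * Real.sqrt (∑ i ∈ I, u i ^ 2) * ‖v‖ *
            ((1 + Real.sqrt (Real.log (1 / δ))) + Real.sqrt ((d : ℝ) * Real.log d) +
              Real.sqrt (m * Real.log ((n : ℝ) / m)))) :
    ∀ βstar βη : EuclideanSpace ℝ (Fin d),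
      |∑ i ∈ Io, w i *
          hub ((y i - n * w i * ⟪x i - μw, βη⟫) / (lamo * Real.sqrt n)) *
          ⟪x i - μw, βη - βstar⟫| ≤
        (2 * C1 + 2 * Cτ * (2 + Real.sqrt (Real.log (1 / δ)))) *
          (ro + rd) * ‖βη - βstar‖ := by
  intro βstar βη
  set u : Fin n → ℝ := fun i => w i * hub ((y i - n * w i * ⟪x i - μw, βη⟫) / (lamo * √n))
  have hu : ∀ i, |u i| ≤ 1 / ((1 - ε) * n) := fun i => abs_mul_hub_le_of_mem_weightSet hw i _
  have hcentred := SparseInnerProductBound.abs_sum_le hsparse hCτ.le hε0 hε hd hIo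
    (sum_sq_le_of_abs_le hε0.le hε.le hIo hu) (βη - βstar)
  have hmass := sum_abs_le_half_of_abs_le hε.le hIo hu
  have hrd'_le : rd' ≤ 2 * rd := hrd' ▸ hrd ▸ sqrt_div_le_two_mul_sqrt_mul_log_div n hd
  rw [← hro, ← hrd] at hcentred
  have hro0 : 0 ≤ ro := hro ▸ by positivity
  have hrd0 : 0 ≤ rd := hrd ▸ Real.sqrt_nonneg _
  have hL : 0 ≤ √(log (1 / δ)) := Real.sqrt_nonneg _
  have hcoef : Cτ * ((2 + √(log (1 / δ))) * rd + 3 / 2 * ro) + 1 / 2 * (C1 * (ro + rd')) ≤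
      (2 * C1 + 2 * Cτ * (2 + √(log (1 / δ)))) * (ro + rd) := by
    nlinarith [mul_nonneg hCτ.le hro0, mul_nonneg hCτ.le hrd0, mul_nonneg hC1.le hro0,
      mul_nonneg hC1.le hrd0, mul_nonneg (mul_nonneg hCτ.le hro0) hL,
      mul_nonneg (mul_nonneg hCτ.le hrd0) hL, mul_le_mul_of_nonneg_left hrd'_le hC1.le]
  calc _ ≤ _ := abs_sum_mul_inner_sub_le Io u x μ μw (βη - βstar)
    _ ≤ Cτ * ((2 + √(log (1 / δ))) * rd + 3 / 2 * ro) * ‖βη - βstar‖ +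
        1 / 2 * (C1 * (ro + rd') * ‖βη - βstar‖) := by
      gcongr
    _ ≤ _ := by nlinarith [norm_nonneg (βη - βstar)]

/-- Confirmation of condition (2) on the good event
(Proposition 4.10 of the paper). -/
theorem conf_cond2_subGaussian
    {n d : ℕ} {ε lamo δ Cτ C1 : ℝ}
    (hε0 : 0 < ε) (hε : ε < 1 / 3) (hlamo : 0 < lamo)
    (hδ0 : 0 < δ) (hδ : δ ≤ 1 / 7)
    (hCτ : 0 < Cτ) (hC1 : 0 < C1)
    (ro rd rd' : ℝ)
    (hro : ro = ε * Real.sqrt (Real.log (1 / ε)))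
    (hrd : rd = Real.sqrt ((d : ℝ) * Real.log d / n))
    (hrd' : rd' = Real.sqrt ((d : ℝ) / n))
    -- `n` is large, of order `d log d`
    (hd : 1 ≤ (d : ℝ) * Real.log d) (hro1 : ro ≤ 1) (hrd1 : rd ≤ 1)
    (w y : Fin n → ℝ) (hw : w ∈ weightSet n ε)
    (x : Fin n → EuclideanSpace ℝ (Fin d))
    (Io : Finset (Fin n)) (hIo : (Io.card : ℝ) ≤ ε * n)
    (μ μw : EuclideanSpace ℝ (Fin d))
    (hμw : ‖μw - μ‖ ≤ C1 * (ro + rd'))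
    -- the sparse-inner-product bound
    (hsparse : ∀ m : ℕ, 1 ≤ m → (m : ℝ) ≤ 3 * (ε * n) →
      ∀ I : Finset (Fin n), I.card = m →
      ∀ (u : Fin n → ℝ) (v : EuclideanSpace ℝ (Fin d)),
        |∑ i ∈ I, u i * ⟪x i - μ, v⟫| ≤
          Cτ * Real.sqrt (∑ i ∈ I, u i ^ 2) * ‖v‖ *
            ((1 + Real.sqrt (Real.log (1 / δ))) + Real.sqrt ((d : ℝ) * Real.log d) +
              Real.sqrt (m * Real.log ((n : ℝ) / m)))) :
    ∀ βstar βη : EuclideanSpace ℝ (Fin d),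
      |∑ i ∈ Io, w i *
          hub ((y i - n * w i * ⟪x i - μw, βη⟫) / (lamo * Real.sqrt n)) *
          ⟪x i - μw, βη - βstar⟫| ≤
        (2 * C1 + 2 * Cτ * (2 + Real.sqrt (Real.log (1 / δ)))) *
          (ro + rd) * ‖βη - βstar‖ :=
  conf_cond2_subGaussian_general hε0 hε hCτ hC1 ro rd rd' hro hrd hrd' hd w y hw x Io hIo μ μw hμw
    hsparse

end
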